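/- Let Θ ⊂ ℝ^N be a bounded measurable set with positive Lebesgue measure and let U : Θ → [0,1] be measurable. Fix J ≥ 1 and δ > 0, let π^{(J)} be the probability measure on Θ with density proportional to (U(θ)+δ)^J with respect to Lebesgue measure, let α ∈ (0,1], ε ∈ [0,1], and define σ = 1 / ( 1 + ((1+δ)/(ε+1+δ))^J · ( (1/α)·(1+δ)/(ε+δ) − 1 ) · (1+δ)/δ ). Then for any probability measure P on Θ, P{ θ ∈ Θ : θ is an approximate global optimizer of U with value imprecision ε and residual domain α } ≥ σ − ‖P − π^{(J)}‖_TV. -/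

import Mathlib

/-!
Let `G` be the set of approximate optimizers and let `t` be an upper quantile of `U`:
`vol {U > t} ≤ α vol Θ ≤ vol {U ≥ t}`. Then `{U ≥ t - ε} ⊆ G`, so on `Θ \ G` the unnormalised
density `(U + δ) ^ J` is at most `(t - ε + δ) ^ J` on a set of volume at most `(1 - α) vol Θ`, while
on `G` it is at least `(t + δ) ^ J` on a set of volume at least `α vol Θ`. Comparing the two gives
`π Gᶜ ≤ K π G`, i.e. `π G ≥ 1 / (1 + K) = σ`, and finally `P G ≥ π G - ‖P - π‖_TV`.
-/

open MeasureTheory Set ENNReal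

section LevelSets

variable {X : Type*} [MeasurableSpace X] {μ : Measure X} {s : Set X} {U : X → ℝ}

lemma antitone_measure_sep_lt : Antitone fun y : ℝ => μ {x ∈ s | y < U x} :=
  fun _ _ hyz => measure_mono fun _ hx => ⟨hx.1, hyz.trans_lt hx.2⟩

lemma measure_sep_lt_le_of_forall_gt {t : ℝ} {c : ℝ≥0∞}
    (h : ∀ y > t, μ {x ∈ s | y < U x} ≤ c) : μ {x ∈ s | t < U x} ≤ c := by
  obtain ⟨u, hu_anti, hu_gt, hu_lim⟩ := exists_seq_strictAnti_tendsto t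
  have hunion : {x ∈ s | t < U x} = ⋃ n, {x ∈ s | u n < U x} := by
    ext x
    simp only [mem_ofPred_eq, mem_iUnion]
    refine ⟨fun ⟨hx, htx⟩ => ?_, fun ⟨n, hx, hn⟩ => ⟨hx, (hu_gt n).trans hn⟩⟩
    obtain ⟨n, hn⟩ := (hu_lim.eventually (gt_mem_nhds htx)).exists
    exact ⟨n, hx, hn⟩
  have hmono : Monotone fun n => {x ∈ s | u n < U x} :=
    fun _ _ hmn _ hx => ⟨hx.1, (hu_anti.antitone hmn).trans_lt hx.2⟩
  rw [hunion, hmono.measure_iUnion]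
  exact iSup_le fun n => h _ (hu_gt n)

lemma le_measure_sep_le_of_forall_lt (hs : MeasurableSet s) (hμs : μ s ≠ ∞) (hU : Measurable U)
    {t : ℝ} {c : ℝ≥0∞} (h : ∀ y < t, c ≤ μ {x ∈ s | y < U x}) :
    c ≤ μ {x ∈ s | t ≤ U x} := by
  obtain ⟨u, hu_mono, hu_lt, hu_lim⟩ := exists_seq_strictMono_tendsto t
  have hinter : {x ∈ s | t ≤ U x} = ⋂ n, {x ∈ s | u n < U x} := by
    ext x
    simp only [mem_ofPred_eq, mem_iInter]
    refine ⟨fun ⟨hx, htx⟩ n => ⟨hx, (hu_lt n).trans_le htx⟩, fun hx => ⟨(hx 0).1, ?_⟩⟩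
    exact le_of_tendsto' hu_lim fun n => (hx n).2.le
  have hanti : Antitone fun n => {x ∈ s | u n < U x} :=
    fun _ _ hmn _ hx => ⟨hx.1, (hu_mono.monotone hmn).trans_lt hx.2⟩
  rw [hinter, hanti.measure_iInter
    (fun n => (hs.inter (measurableSet_lt measurable_const hU)).nullMeasurableSet)
    ⟨0, ne_top_of_le_ne_top hμs (measure_mono fun _ hx => hx.1)⟩]
  exact le_iInf fun n => h _ (hu_lt n)

lemma exists_upper_quantile (hs : MeasurableSet s) (hμs : μ s ≠ ∞) (hU : Measurable U)
    {a b : ℝ} (hab : a ≤ b) (hUs : ∀ x ∈ s, U x ∈ Icc a b) {c : ℝ≥0∞} (hc : c ≤ μ s) :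
    ∃ t ∈ Icc a b, μ {x ∈ s | t < U x} ≤ c ∧ c ≤ μ {x ∈ s | t ≤ U x} := by
  set S := {y | a ≤ y ∧ μ {x ∈ s | y < U x} ≤ c}
  have hbS : b ∈ S := by
    refine ⟨hab, le_of_eq_of_le ?_ zero_le⟩
    exact measure_eq_zero_iff_ae_notMem.2 (ae_of_all _ fun x hx => (hUs x hx.1).2.not_gt hx.2)
  have hS : BddBelow S := ⟨a, fun _ hy => hy.1⟩
  refine ⟨sInf S, ⟨le_csInf ⟨b, hbS⟩ fun _ hy => hy.1, csInf_le hS hbS⟩, ?_, ?_⟩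
  · refine measure_sep_lt_le_of_forall_gt fun y hy => ?_
    obtain ⟨z, hzS, hzy⟩ := exists_lt_of_csInf_lt ⟨b, hbS⟩ hy
    exact (antitone_measure_sep_lt hzy.le).trans hzS.2
  · refine le_measure_sep_le_of_forall_lt hs hμs hU fun y hy => ?_
    rcases lt_or_ge y a with hya | hay
    · exact hc.trans (measure_mono fun x hx => ⟨hx, hya.trans_le (hUs x hx).1⟩)
    · exact (not_le.1 fun h => notMem_of_lt_csInf hy hS ⟨hay, h⟩).le

lemma measure_diff_le_ofReal_one_sub_mul {T : Set X} (hT : MeasurableSet T) (hTs : T ⊆ s)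
    (hμs : μ s ≠ ∞) {a : ℝ} (ha : 0 ≤ a) (h : ENNReal.ofReal a * μ s ≤ μ T) :
    μ (s \ T) ≤ ENNReal.ofReal (1 - a) * μ s := by
  rw [measure_sdiff hTs hT.nullMeasurableSet (ne_top_of_le_ne_top hμs (measure_mono hTs)),
    ENNReal.ofReal_sub _ ha, ENNReal.ofReal_one, ENNReal.sub_mul fun _ _ => hμs, one_mul]
  exact tsub_le_tsub_left h _

end LevelSets

section Optimizers

variable {X : Type*} [MeasurableSpace X] {μ : Measure X} {s : Set X} {U : X → ℝ}

def approxGlobalOptimizers (μ : Measure X) (s : Set X) (U : X → ℝ) (ε α : ℝ) : Set X :=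
  {θ ∈ s | μ {θ' ∈ s | U θ' > U θ + ε} ≤ ENNReal.ofReal α * μ s}

lemma measurableSet_approxGlobalOptimizers (hs : MeasurableSet s) (hU : Measurable U)
    (ε α : ℝ) : MeasurableSet (approxGlobalOptimizers μ s U ε α) :=
  hs.inter <| measurableSet_le
    (antitone_measure_sep_lt.measurable.comp (hU.add_const ε)) measurable_const

lemma sep_le_subset_approxGlobalOptimizers {t ε α : ℝ}
    (ht : μ {x ∈ s | t < U x} ≤ ENNReal.ofReal α * μ s) :
    {x ∈ s | t - ε ≤ U x} ⊆ approxGlobalOptimizers μ s U ε α :=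
  fun x hx => ⟨hx.1, (antitone_measure_sep_lt (by linarith [hx.2])).trans ht⟩

end Optimizers

section OddsBound

/-- In the theorem `σ = 1 / (1 + oddsBound J δ α ε)`: this bounds the odds `π Gᶜ / π G`
against the set `G` of approximate optimizers. -/
noncomputable def oddsBound (J δ α ε : ℝ) : ℝ :=
  ((1 + δ) / (ε + 1 + δ)) ^ J * ((1 / α) * (1 + δ) / (ε + δ) - 1) * ((1 + δ) / δ)

variable {J δ α ε : ℝ}

lemma oddsBound_nonneg (hδ : 0 < δ) (hα : α ∈ Ioc 0 1) (hε : ε ∈ Icc 0 1) :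
    0 ≤ oddsBound J δ α ε := by
  obtain ⟨hε0, hε1⟩ := hε
  have h : 1 ≤ (1 / α) * (1 + δ) / (ε + δ) := by
    rw [one_le_div (by linarith), one_div_mul_eq_div, le_div_iff₀ hα.1]
    nlinarith [mul_le_mul_of_nonneg_left hα.2 (by linarith : 0 ≤ ε + δ)]
  unfold oddsBound
  exact mul_nonneg (mul_nonneg (by positivity) (by linarith)) (by positivity)

/-- The density ratio `(t - ε + δ) ^ J / (t + δ) ^ J` is largest at `t = 1`. -/
lemma rpow_sub_le_rpow_mul (hJ : 0 ≤ J) (hδ : 0 < δ) {t : ℝ} (hε : 0 ≤ ε) (hεt : ε ≤ t)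
    (ht : t ≤ 1) :
    (t - ε + δ) ^ J ≤ ((1 + δ) / (ε + 1 + δ)) ^ J * (t + δ) ^ J := by
  rw [← Real.mul_rpow (by positivity) (by linarith)]
  refine Real.rpow_le_rpow (by linarith) ?_ hJ
  rw [div_mul_eq_mul_div, le_div_iff₀ (by linarith)]
  nlinarith [mul_nonneg hε (by linarith : (0 : ℝ) ≤ 1 + ε - t)]

lemma rpow_mul_one_sub_le_oddsBound_mul (hJ : 0 ≤ J) (hδ : 0 < δ) (hα : α ∈ Ioc 0 1)
    (hε : ε ∈ Icc 0 1) {t : ℝ} (hεt : ε ≤ t) (ht : t ≤ 1) :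
    (t - ε + δ) ^ J * (1 - α) ≤ oddsBound J δ α ε * ((t + δ) ^ J * α) := by
  obtain ⟨hα0, hα1⟩ := hα
  obtain ⟨hε0, hε1⟩ := hε
  have hmass : 1 - α ≤ α * ((1 / α) * (1 + δ) / (ε + δ) - 1) * ((1 + δ) / δ) := by
    have h1 : α * ((1 / α) * (1 + δ) / (ε + δ)) = (1 + δ) / (ε + δ) := by field_simp
    have h2 : 1 ≤ (1 + δ) / (ε + δ) := by rw [one_le_div (by linarith)]; linarith
    have h3 : 1 ≤ (1 + δ) / δ := by rw [one_le_div hδ]; linarith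
    rw [mul_sub, h1, mul_one]
    nlinarith
  calc (t - ε + δ) ^ J * (1 - α)
      ≤ (((1 + δ) / (ε + 1 + δ)) ^ J * (t + δ) ^ J) *
          (α * ((1 / α) * (1 + δ) / (ε + δ) - 1) * ((1 + δ) / δ)) :=
        mul_le_mul (rpow_sub_le_rpow_mul hJ hδ hε0 hεt ht) hmass (by linarith)
          (mul_nonneg (by positivity) (Real.rpow_nonneg (by linarith) _))
    _ = oddsBound J δ α ε * ((t + δ) ^ J * α) := by unfold oddsBound; ring

end OddsBound

section WeightedMass

variable {X : Type*} [MeasurableSpace X] {μ : Measure X} {s : Set X} {U : X → ℝ}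
  {J δ α ε t : ℝ}

lemma setLIntegral_diff_approxGlobalOptimizers_le (hs : MeasurableSet s) (hμs : μ s ≠ ∞)
    (hU : Measurable U) (hUs : ∀ x ∈ s, U x ∈ Icc 0 1) (hJ : 0 ≤ J) (hδ : 0 < δ)
    (hα : 0 ≤ α) (hε : 0 ≤ ε) (hεt : ε ≤ t)
    (hlt : μ {x ∈ s | t < U x} ≤ ENNReal.ofReal α * μ s)
    (hge : ENNReal.ofReal α * μ s ≤ μ {x ∈ s | t ≤ U x}) :
    ∫⁻ x in s \ approxGlobalOptimizers μ s U ε α, ENNReal.ofReal ((U x + δ) ^ J) ∂μ ≤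
      ENNReal.ofReal ((t - ε + δ) ^ J * (1 - α)) * μ s := by
  set G := approxGlobalOptimizers μ s U ε α
  have hGs : {x ∈ s | t - ε ≤ U x} ⊆ G := sep_le_subset_approxGlobalOptimizers hlt
  have hB : ∀ x ∈ s \ G, U x ≤ t - ε := fun x hx => (not_le.1 fun h => hx.2 (hGs ⟨hx.1, h⟩)).le
  calc ∫⁻ x in s \ G, ENNReal.ofReal ((U x + δ) ^ J) ∂μ
      ≤ ∫⁻ _ in s \ G, ENNReal.ofReal ((t - ε + δ) ^ J) ∂μ :=
        setLIntegral_mono' (hs.diff (measurableSet_approxGlobalOptimizers hs hU ε α))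
          fun x hx => ENNReal.ofReal_le_ofReal <| Real.rpow_le_rpow
            (by linarith [(hUs x hx.1).1]) (by linarith [hB x hx]) hJ
    _ = ENNReal.ofReal ((t - ε + δ) ^ J) * μ (s \ G) := setLIntegral_const _ _
    _ ≤ ENNReal.ofReal ((t - ε + δ) ^ J) * μ (s \ {x ∈ s | t ≤ U x}) :=
        mul_le_mul_right (measure_mono (sdiff_subset_sdiff_right
          fun x hx => hGs ⟨hx.1, by linarith [hx.2]⟩)) _
    _ ≤ ENNReal.ofReal ((t - ε + δ) ^ J) * (ENNReal.ofReal (1 - α) * μ s) :=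
        mul_le_mul_right (measure_diff_le_ofReal_one_sub_mul
          (hs.inter (measurableSet_le measurable_const hU)) (sep_subset _ _) hμs hα hge) _
    _ = ENNReal.ofReal ((t - ε + δ) ^ J * (1 - α)) * μ s := by
        rw [← mul_assoc, ← ENNReal.ofReal_mul (Real.rpow_nonneg (by linarith) _)]

lemma ofReal_mul_le_setLIntegral_approxGlobalOptimizers (hs : MeasurableSet s)
    (hU : Measurable U) (hJ : 0 ≤ J) (hδ : 0 < δ) (hε : 0 ≤ ε) (ht : 0 ≤ t)
    (hlt : μ {x ∈ s | t < U x} ≤ ENNReal.ofReal α * μ s)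
    (hge : ENNReal.ofReal α * μ s ≤ μ {x ∈ s | t ≤ U x}) :
    ENNReal.ofReal ((t + δ) ^ J * α) * μ s ≤
      ∫⁻ x in approxGlobalOptimizers μ s U ε α, ENNReal.ofReal ((U x + δ) ^ J) ∂μ := by
  set T := {x ∈ s | t ≤ U x}
  have hT : MeasurableSet T := hs.inter (measurableSet_le measurable_const hU)
  calc ENNReal.ofReal ((t + δ) ^ J * α) * μ s
      = ENNReal.ofReal ((t + δ) ^ J) * (ENNReal.ofReal α * μ s) := by
        rw [← mul_assoc, ← ENNReal.ofReal_mul (Real.rpow_nonneg (by linarith) _)]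
    _ ≤ ENNReal.ofReal ((t + δ) ^ J) * μ T := mul_le_mul_right hge _
    _ = ∫⁻ _ in T, ENNReal.ofReal ((t + δ) ^ J) ∂μ := (setLIntegral_const _ _).symm
    _ ≤ ∫⁻ x in T, ENNReal.ofReal ((U x + δ) ^ J) ∂μ :=
        setLIntegral_mono' hT fun x hx => ENNReal.ofReal_le_ofReal <| Real.rpow_le_rpow
          (by linarith) (by linarith [hx.2]) hJ
    _ ≤ ∫⁻ x in approxGlobalOptimizers μ s U ε α, ENNReal.ofReal ((U x + δ) ^ J) ∂μ :=
        lintegral_mono_set fun x hx =>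
          sep_le_subset_approxGlobalOptimizers hlt ⟨hx.1, by linarith [hx.2]⟩

lemma setLIntegral_diff_approxGlobalOptimizers_le_oddsBound_mul (hs : MeasurableSet s)
    (hμs : μ s ≠ ∞) (hU : Measurable U) (hUs : ∀ x ∈ s, U x ∈ Icc 0 1) (hJ : 0 ≤ J)
    (hδ : 0 < δ) (hα : α ∈ Ioc 0 1) (hε : ε ∈ Icc 0 1) :
    ∫⁻ x in s \ approxGlobalOptimizers μ s U ε α, ENNReal.ofReal ((U x + δ) ^ J) ∂μ ≤
      ENNReal.ofReal (oddsBound J δ α ε) *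
        ∫⁻ x in approxGlobalOptimizers μ s U ε α, ENNReal.ofReal ((U x + δ) ^ J) ∂μ := by
  obtain ⟨t, ⟨ht0, ht1⟩, hlt, hge⟩ := exists_upper_quantile hs hμs hU zero_le_one hUs
    (mul_le_of_le_one_left' (ENNReal.ofReal_le_one.2 hα.2))
  rcases lt_or_ge t ε with htε | hεt
  · have hB : s \ approxGlobalOptimizers μ s U ε α = ∅ := sdiff_eq_empty.2 fun x hx =>
      sep_le_subset_approxGlobalOptimizers hlt ⟨hx, by linarith [(hUs x hx).1]⟩
    simp [hB]
  calc ∫⁻ x in s \ approxGlobalOptimizers μ s U ε α, ENNReal.ofReal ((U x + δ) ^ J) ∂μ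
      ≤ ENNReal.ofReal ((t - ε + δ) ^ J * (1 - α)) * μ s :=
        setLIntegral_diff_approxGlobalOptimizers_le hs hμs hU hUs hJ hδ hα.1.le hε.1 hεt hlt hge
    _ ≤ ENNReal.ofReal (oddsBound J δ α ε * ((t + δ) ^ J * α)) * μ s :=
        mul_le_mul_left (ENNReal.ofReal_le_ofReal
          (rpow_mul_one_sub_le_oddsBound_mul hJ hδ hα hε hεt ht1)) _
    _ = ENNReal.ofReal (oddsBound J δ α ε) * (ENNReal.ofReal ((t + δ) ^ J * α) * μ s) := by
        rw [ENNReal.ofReal_mul (oddsBound_nonneg hδ hα hε), mul_assoc]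
    _ ≤ _ := mul_le_mul_right
        (ofReal_mul_le_setLIntegral_approxGlobalOptimizers hs hU hJ hδ hε.1 ht0 hlt hge) _

lemma measure_compl_approxGlobalOptimizers_le (hs : MeasurableSet s) (hμs : μ s ≠ ∞)
    (hU : Measurable U) (hUs : ∀ x ∈ s, U x ∈ Icc 0 1) (hJ : 0 ≤ J) (hδ : 0 < δ)
    (hα : α ∈ Ioc 0 1) (hε : ε ∈ Icc 0 1) {π : Measure X}
    (hπ : ∀ A : Set X, MeasurableSet A →
      π A = (∫⁻ x in A ∩ s, ENNReal.ofReal ((U x + δ) ^ J) ∂μ) /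
            (∫⁻ x in s, ENNReal.ofReal ((U x + δ) ^ J) ∂μ)) :
    π (approxGlobalOptimizers μ s U ε α)ᶜ ≤
      ENNReal.ofReal (oddsBound J δ α ε) * π (approxGlobalOptimizers μ s U ε α) := by
  have hG := measurableSet_approxGlobalOptimizers (μ := μ) hs hU ε α
  rw [hπ _ hG.compl, hπ _ hG, ← sdiff_eq_compl_inter,
    inter_eq_left.2 fun _ hx => hx.1, ← mul_div_assoc]
  exact ENNReal.div_le_div_right
    (setLIntegral_diff_approxGlobalOptimizers_le_oddsBound_mul hs hμs hU hUs hJ hδ hα hε) _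

end WeightedMass

section Probability

variable {Ω : Type*} [MeasurableSpace Ω]

lemma one_div_one_add_le_toReal_of_compl_le {π : Measure Ω} [IsProbabilityMeasure π] {G : Set Ω}
    (hG : MeasurableSet G) {K : ℝ} (hK : 0 ≤ K) (h : π Gᶜ ≤ ENNReal.ofReal K * π G) :
    1 / (1 + K) ≤ (π G).toReal := by
  have h' : (π Gᶜ).toReal ≤ K * (π G).toReal := by
    simpa [ENNReal.toReal_mul, ENNReal.toReal_ofReal hK] using
      ENNReal.toReal_mono (ENNReal.mul_ne_top ENNReal.ofReal_ne_top (measure_ne_top π G)) h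
  rw [← measureReal_def, ← measureReal_def, probReal_compl_eq_one_sub hG] at h'
  rw [div_le_iff₀ (by linarith), ← measureReal_def]
  linarith

noncomputable def tvDist (P Q : Measure Ω) : ℝ :=
  sSup {r : ℝ | ∃ A : Set Ω, MeasurableSet A ∧ r = |(P A).toReal - (Q A).toReal|}

lemma abs_sub_le_tvDist (P Q : Measure Ω) [IsFiniteMeasure P] [IsFiniteMeasure Q] {A : Set Ω}
    (hA : MeasurableSet A) : |(P A).toReal - (Q A).toReal| ≤ tvDist P Q := by
  refine le_csSup ⟨P.real univ + Q.real univ, ?_⟩ ⟨A, hA, rfl⟩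
  rintro r ⟨B, -, rfl⟩
  have hP := measureReal_mono (μ := P) (subset_univ B)
  have hQ := measureReal_mono (μ := Q) (subset_univ B)
  have := measureReal_nonneg (μ := P) (s := B)
  have := measureReal_nonneg (μ := Q) (s := B)
  change |P.real B - Q.real B| ≤ _
  rw [abs_sub_le_iff]
  constructor <;> linarith

lemma toReal_sub_tvDist_le (P Q : Measure Ω) [IsFiniteMeasure P] [IsFiniteMeasure Q]
    {A : Set Ω} (hA : MeasurableSet A) : (Q A).toReal - tvDist P Q ≤ (P A).toReal := by
  linarith [abs_sub_le_tvDist P Q hA, neg_abs_le ((P A).toReal - (Q A).toReal)]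

end Probability

theorem simulated_annealing_finite_time_general {N : ℕ} (Θ : Set (Fin N → ℝ))
    (hΘm : MeasurableSet Θ) (hΘb : Bornology.IsBounded Θ)
    (U : (Fin N → ℝ) → ℝ) (hUmeas : Measurable U)
    (hU : ∀ θ ∈ Θ, U θ ∈ Set.Icc (0 : ℝ) 1)
    (J δ : ℝ) (hJ : 1 ≤ J) (hδ : 0 < δ)
    (α ε : ℝ) (hα : α ∈ Set.Ioc (0 : ℝ) 1) (hε : ε ∈ Set.Icc (0 : ℝ) 1)
    (σ : ℝ)
    (hσ : σ = 1 / (1 + ((1 + δ) / (ε + 1 + δ)) ^ J *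
      ((1 / α) * (1 + δ) / (ε + δ) - 1) * ((1 + δ) / δ)))
    (π : Measure (Fin N → ℝ)) (hπprob : IsProbabilityMeasure π)
    (hπ : ∀ A : Set (Fin N → ℝ), MeasurableSet A →
      π A = (∫⁻ θ in A ∩ Θ, ENNReal.ofReal ((U θ + δ) ^ J)) /
            (∫⁻ θ in Θ, ENNReal.ofReal ((U θ + δ) ^ J)))
    (P : Measure (Fin N → ℝ)) (hPprob : IsProbabilityMeasure P) :
    (P {θ ∈ Θ | volume {θ' ∈ Θ | U θ' > U θ + ε} ≤ ENNReal.ofReal α * volume Θ}).toReal ≥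
      σ - sSup {r : ℝ | ∃ A : Set (Fin N → ℝ), MeasurableSet A ∧
        r = |(P A).toReal - (π A).toReal|} := by
  have hG := measurableSet_approxGlobalOptimizers (μ := volume) hΘm hUmeas ε α
  have hπG : σ ≤ (π (approxGlobalOptimizers volume Θ U ε α)).toReal := by
    rw [hσ]
    exact one_div_one_add_le_toReal_of_compl_le hG (oddsBound_nonneg hδ hα hε)
      (measure_compl_approxGlobalOptimizers_le hΘm hΘb.measure_lt_top.ne hUmeas hU
        (zero_le_one.trans hJ) hδ hα hε hπ)
  show σ - tvDist P π ≤ (P (approxGlobalOptimizers volume Θ U ε α)).toReal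
  linarith [toReal_sub_tvDist_le P π hG]

/-- **Theorem 2 of the paper.** If `π` is the probability measure on `Θ` with density
proportional to `(U θ + δ)^J` w.r.t. Lebesgue measure, then for any probability measure `P`
concentrated on `Θ` (e.g. the law of the state of a simulated annealing chain), the
`P`-probability of the set of approximate global optimizers of `U` with value imprecision `ε`
and residual domain `α` is at least `σ - ‖P - π‖_TV`, where
`‖P - π‖_TV = sup_A |P(A) - π(A)|`. -/
theorem simulated_annealing_finite_time {N : ℕ} (Θ : Set (Fin N → ℝ))
    (hΘm : MeasurableSet Θ) (hΘb : Bornology.IsBounded Θ) (hΘpos : 0 < volume Θ)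
    (U : (Fin N → ℝ) → ℝ) (hUmeas : Measurable U)
    (hU : ∀ θ ∈ Θ, U θ ∈ Set.Icc (0 : ℝ) 1)
    (J δ : ℝ) (hJ : 1 ≤ J) (hδ : 0 < δ)
    (α ε : ℝ) (hα : α ∈ Set.Ioc (0 : ℝ) 1) (hε : ε ∈ Set.Icc (0 : ℝ) 1)
    (σ : ℝ)
    (hσ : σ = 1 / (1 + ((1 + δ) / (ε + 1 + δ)) ^ J *
      ((1 / α) * (1 + δ) / (ε + δ) - 1) * ((1 + δ) / δ)))
    (π : Measure (Fin N → ℝ)) (hπprob : IsProbabilityMeasure π)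
    (hπ : ∀ A : Set (Fin N → ℝ), MeasurableSet A →
      π A = (∫⁻ θ in A ∩ Θ, ENNReal.ofReal ((U θ + δ) ^ J)) /
            (∫⁻ θ in Θ, ENNReal.ofReal ((U θ + δ) ^ J)))
    (P : Measure (Fin N → ℝ)) (hPprob : IsProbabilityMeasure P) (hPΘ : P Θ = 1) :
    (P {θ ∈ Θ | volume {θ' ∈ Θ | U θ' > U θ + ε} ≤ ENNReal.ofReal α * volume Θ}).toReal ≥
      σ - sSup {r : ℝ | ∃ A : Set (Fin N → ℝ), MeasurableSet A ∧
        r = |(P A).toReal - (π A).toReal|} :=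
  simulated_annealing_finite_time_general Θ hΘm hΘb U hUmeas hU J δ hJ hδ α ε hα hε σ hσ π hπprob hπ
    P hPprob
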